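/- The number of prime implicants of MUX_n equals 3^n, and likewise the number of prime implicates of MUX_n equals 3^n. -/

import Mathlib

/-- Ternary values: `none` is the unstable value `u`. -/
abbrev TVal := Option Bool

/-- `a` is a resolution of `α`: it agrees with `α` on all stable coordinates. -/
def isRes {ι : Type*} (α : ι → TVal) (a : ι → Bool) : Prop :=
  ∀ i b, α i = some b → a i = b

/-- The hazard-free extension of a Boolean function. -/
noncomputable def hfe {ι : Type*} (f : (ι → Bool) → Bool) (α : ι → TVal) : TVal := by
  classical
  exact if ∀ a, isRes α a → f a = true then some true
    else if ∀ a, isRes α a → f a = false then some false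
    else none

/-- `β` is below `α` in the instability partial order (coordinatewise `u ≤ 0`, `u ≤ 1`). -/
def below {ι : Type*} (β α : ι → TVal) : Prop := ∀ i, β i = none ∨ β i = α i

/-- A prime implicant: an implicant minimal in the instability order. -/
def primeImplicant {ι : Type*} (f : (ι → Bool) → Bool) (α : ι → TVal) : Prop :=
  hfe f α = some true ∧ ∀ β, below β α → hfe f β = some true → β = α

/-- A prime implicate: an implicate minimal in the instability order. -/
def primeImplicate {ι : Type*} (f : (ι → Bool) → Bool) (α : ι → TVal) : Prop :=
  hfe f α = some false ∧ ∀ β, below β α → hfe f β = some false → β = α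

/-- The multiplexer function: data bits are indexed directly by selector strings. -/
def MUX (n : ℕ) (v : (Fin n ⊕ (Fin n → Bool)) → Bool) : Bool :=
  v (Sum.inr fun i => v (Sum.inl i))

/-- The extension of a selector string `α` by `1`s on the resolutions of `α`
and `u`s elsewhere. -/
noncomputable def muxPI (n : ℕ) (α : Fin n → TVal) : (Fin n ⊕ (Fin n → Bool)) → TVal := by
  classical
  exact Sum.elim α fun a => if isRes α a then some true else none

/-- The extension of a selector string `α` by `0`s on the resolutions of `α`
and `u`s elsewhere. -/
noncomputable def muxPIm (n : ℕ) (α : Fin n → TVal) : (Fin n ⊕ (Fin n → Bool)) → TVal := by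
  classical
  exact Sum.elim α fun a => if isRes α a then some false else none


/-!
If the ternary input `β` is an implicant (or implicate) with value `c`, then every data bit
addressed by a resolution of the selector part of `β` must be stable with value `c`: otherwise a
resolution addressing that bit could set it to `!c`. Hence every implicant lies above the
extension of its selector part by `c`s on the addressed data bits, and that extension is itself an
implicant; a prime one is therefore equal to it. Conversely such an extension is prime, because
making a stable selector bit unstable lets the selector address a data bit that is unstable.
So the prime implicants (implicates) are parametrised by the selector strings in `{0,u,1}ⁿ`.
-/

theorem isRes_getD {ι : Type*} (β : ι → TVal) : isRes β fun i => (β i).getD false :=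
  fun _ _ h => by simp [h]

theorem hfe_eq_some_iff {ι : Type*} {f : (ι → Bool) → Bool} {β : ι → TVal} {c : Bool} :
    hfe f β = some c ↔ ∀ a, isRes β a → f a = c := by
  have h₀ : ∃ a, isRes β a := ⟨_, isRes_getD β⟩
  unfold hfe
  split_ifs <;> cases c <;> simp_all

namespace MUX

variable {n : ℕ}

/-- The common form of `muxPI` (`c = true`) and `muxPIm` (`c = false`). -/
noncomputable def muxExt (n : ℕ) (c : Bool) (α : Fin n → TVal) :
    (Fin n ⊕ (Fin n → Bool)) → TVal := by
  classical
  exact Sum.elim α fun a => if isRes α a then some c else none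

theorem muxExt_comp_inl (c : Bool) (α : Fin n → TVal) : muxExt n c α ∘ Sum.inl = α := rfl

theorem muxExt_inr_of_isRes {c : Bool} {α : Fin n → TVal} {a : Fin n → Bool}
    (h : isRes α a) : muxExt n c α (Sum.inr a) = some c := by
  simp [muxExt, h]

theorem muxExt_inr_of_not_isRes {c : Bool} {α : Fin n → TVal} {a : Fin n → Bool}
    (h : ¬isRes α a) : muxExt n c α (Sum.inr a) = none := by
  simp [muxExt, h]

theorem hfe_muxExt (c : Bool) (α : Fin n → TVal) : hfe (MUX n) (muxExt n c α) = some c :=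
  hfe_eq_some_iff.2 fun _ hv =>
    hv (Sum.inr _) c (muxExt_inr_of_isRes fun i b hb => hv (Sum.inl i) b hb)

theorem data_eq_of_hfe_eq_some {β : (Fin n ⊕ (Fin n → Bool)) → TVal} {c : Bool}
    (hβ : hfe (MUX n) β = some c) {a : Fin n → Bool} (ha : isRes (β ∘ Sum.inl) a) :
    β (Sum.inr a) = some c := by
  by_contra hne
  let v := Sum.elim a fun x => if x = a then !c else (β (Sum.inr x)).getD false
  have hv : isRes β v := by
    rintro (i | x) b hb
    · exact ha i b hb
    · by_cases hx : x = a
      · subst hx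
        cases b <;> cases c <;> simp_all [v]
      · simp [v, hx, hb]
  have hMUX : MUX n v = !c := by simp [MUX, v]
  simpa [hMUX] using hfe_eq_some_iff.1 hβ v hv

theorem below_muxExt_comp_inl {γ : (Fin n ⊕ (Fin n → Bool)) → TVal} {c : Bool}
    (hγ : hfe (MUX n) γ = some c) : below (muxExt n c (γ ∘ Sum.inl)) γ := by
  rintro (i | a)
  · exact Or.inr rfl
  · by_cases ha : isRes (γ ∘ Sum.inl) a
    · exact Or.inr ((muxExt_inr_of_isRes ha).trans (data_eq_of_hfe_eq_some hγ ha).symm)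
    · exact Or.inl (muxExt_inr_of_not_isRes ha)

theorem comp_inl_eq_of_below_muxExt {β : (Fin n ⊕ (Fin n → Bool)) → TVal} {c : Bool}
    {α : Fin n → TVal} (hβα : below β (muxExt n c α)) (hβ : hfe (MUX n) β = some c) :
    β ∘ Sum.inl = α := by
  funext i
  rcases hβα (Sum.inl i) with hi | hi
  · cases hαi : α i with
    | none => exact hi
    | some b =>
      exfalso
      -- flipping the selector bit `i` addresses a data bit which is unstable in `β`
      let a := Function.update (fun j => (α j).getD false) i (!b)
      have ha : isRes (β ∘ Sum.inl) a := by
        intro j b' hj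
        rcases hβα (Sum.inl j) with h | h
        · simp_all
        · have hji : j ≠ i := by rintro rfl; simp_all
          simp_all [a, muxExt]
      have hna : ¬isRes α a := fun h => by simpa [a] using h i b hαi
      rcases hβα (Sum.inr a) with h | h <;>
        simp [data_eq_of_hfe_eq_some hβ ha, muxExt_inr_of_not_isRes hna] at h
  · exact hi

theorem eq_muxExt_of_below {β : (Fin n ⊕ (Fin n → Bool)) → TVal} {c : Bool}
    {α : Fin n → TVal} (hβα : below β (muxExt n c α)) (hβ : hfe (MUX n) β = some c) :
    β = muxExt n c α := by
  have hsel := comp_inl_eq_of_below_muxExt hβα hβ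
  funext x
  rcases x with i | a
  · exact congrFun hsel i
  · by_cases ha : isRes α a
    · rw [muxExt_inr_of_isRes ha, data_eq_of_hfe_eq_some hβ (hsel ▸ ha)]
    · rcases hβα (Sum.inr a) with h | h <;> simp [h, muxExt_inr_of_not_isRes ha]

theorem minimal_hfe_iff_mem_range_muxExt {c : Bool} {γ : (Fin n ⊕ (Fin n → Bool)) → TVal} :
    (hfe (MUX n) γ = some c ∧ ∀ β, below β γ → hfe (MUX n) β = some c → β = γ) ↔
      γ ∈ Set.range (muxExt n c) := by
  constructor
  · rintro ⟨hγ, hmin⟩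
    exact ⟨_, hmin _ (below_muxExt_comp_inl hγ) (hfe_muxExt c _)⟩
  · rintro ⟨α, rfl⟩
    exact ⟨hfe_muxExt c α, fun β hβα hβ => eq_muxExt_of_below hβα hβ⟩

theorem card_range_muxExt (c : Bool) : Nat.card (Set.range (muxExt n c)) = 3 ^ n := by
  have hinj : Function.Injective (muxExt n c) :=
    Function.LeftInverse.injective (g := (· ∘ Sum.inl)) (muxExt_comp_inl c)
  rw [Nat.card_range_of_injective hinj, Nat.card_fun]
  simp

theorem primeImplicant_iff_mem_range_muxPI {γ : (Fin n ⊕ (Fin n → Bool)) → TVal} :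
    primeImplicant (MUX n) γ ↔ γ ∈ Set.range (muxPI n) :=
  minimal_hfe_iff_mem_range_muxExt

theorem primeImplicate_iff_mem_range_muxPIm {γ : (Fin n ⊕ (Fin n → Bool)) → TVal} :
    primeImplicate (MUX n) γ ↔ γ ∈ Set.range (muxPIm n) :=
  minimal_hfe_iff_mem_range_muxExt

end MUX

theorem stmt4 (n : ℕ) :
    Nat.card {γ : (Fin n ⊕ (Fin n → Bool)) → TVal // primeImplicant (MUX n) γ} = 3 ^ n ∧
    Nat.card {γ : (Fin n ⊕ (Fin n → Bool)) → TVal // primeImplicate (MUX n) γ} = 3 ^ n := by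
  constructor
  · rw [← MUX.card_range_muxExt true]
    exact Nat.card_congr (.subtypeEquivRight fun _ => MUX.primeImplicant_iff_mem_range_muxPI)
  · rw [← MUX.card_range_muxExt false]
    exact Nat.card_congr (.subtypeEquivRight fun _ => MUX.primeImplicate_iff_mem_range_muxPIm)
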